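/- If a possibility frame F = (S,⊑,P) satisfies the separation condition (for all x,y ∈ S, if y ⋢ x then there is U ∈ P with x ∈ U and y ∉ U), then the underlying poset (S,⊑) is separative. -/

import Mathlib

/-- A set `U` in a poset is *regular open* if
`U = {x | ∀ x' ≤ x, ∃ x'' ≤ x', x'' ∈ U}`. -/
def IsRO {S : Type*} [PartialOrder S] (U : Set S) : Prop :=
  U = {x : S | ∀ x' ≤ x, ∃ x'' ≤ x', x'' ∈ U}

/-- Negation in the regular open algebra of a poset. -/
def roNeg {S : Type*} [PartialOrder S] (U : Set S) : Set S :=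
  {x : S | ∀ x' ≤ x, x' ∉ U}

namespace IsRO

variable {S : Type*} [PartialOrder S] {U : Set S}

theorem exists_le_mem (hU : IsRO U) {x : S} (hx : x ∈ U) {w : S} (hwx : w ≤ x) :
    ∃ u ≤ w, u ∈ U := by
  rw [hU] at hx
  exact hx w hwx

theorem exists_le_forall_le_notMem (hU : IsRO U) {y : S} (hy : y ∉ U) :
    ∃ z ≤ y, ∀ w ≤ z, w ∉ U := by
  rw [hU] at hy
  simpa using hy

theorem exists_le_Iic_inter_Iic_eq_empty (hU : IsRO U) {x y : S} (hx : x ∈ U) (hy : y ∉ U) :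
    ∃ z ≤ y, Set.Iic z ∩ Set.Iic x = ∅ := by
  obtain ⟨z, hzy, hz⟩ := hU.exists_le_forall_le_notMem hy
  refine ⟨z, hzy, Set.eq_empty_of_forall_notMem fun w ⟨hwz, hwx⟩ => ?_⟩
  obtain ⟨u, huw, huU⟩ := hU.exists_le_mem hx hwx
  exact hz u (huw.trans hwz) huU

end IsRO

theorem separation_implies_separative_general {S : Type*} [PartialOrder S]
    (P : Set (Set S))
    (hro : ∀ U ∈ P, IsRO U)
    (hsepn : ∀ x y : S, ¬ y ≤ x → ∃ U ∈ P, x ∈ U ∧ y ∉ U) :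
    ∀ x y : S, ¬ y ≤ x → ∃ z ≤ y, {w : S | w ≤ z} ∩ {w : S | w ≤ x} = ∅ := by
  intro x y hyx
  obtain ⟨U, hUP, hxU, hyU⟩ := hsepn x y hyx
  exact (hro U hUP).exists_le_Iic_inter_Iic_eq_empty hxU hyU

/-- If a possibility frame `(S,⊑,P)` satisfies the separation condition, then
the underlying poset is separative: `y ⋢ x` implies there is `z ⊑ y` with
`↓z ∩ ↓x = ∅`. -/
theorem separation_implies_separative {S : Type*} [PartialOrder S]
    (P : Set (Set S)) (hne : P.Nonempty)
    (hro : ∀ U ∈ P, IsRO U)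
    (hneg : ∀ U ∈ P, roNeg U ∈ P)
    (hinter : ∀ U ∈ P, ∀ V ∈ P, U ∩ V ∈ P)
    (hsepn : ∀ x y : S, ¬ y ≤ x → ∃ U ∈ P, x ∈ U ∧ y ∉ U) :
    ∀ x y : S, ¬ y ≤ x → ∃ z ≤ y, {w : S | w ≤ z} ∩ {w : S | w ≤ x} = ∅ :=
  separation_implies_separative_general P hro hsepn
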